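/- Let (X,d) be a metric space, M a nonempty proper closed subset of X, and F : X∖M → (0,∞) a 1-Lipschitz function, and let v(x,y) = 2·log((d(x,y) + max{F(x), F(y)}) / √(F(x)·F(y))) be the generalized Ibragimov metric on X∖M. Then the identity map 1 : (X∖M, d) → (X∖M, v) is a homeomorphism, and it is (5/2)-quasiconformal: for every x ∈ X∖M, limsup_{r→0⁺} [ sup{ v(x,y) : y ∈ X∖M, d(x,y) ≤ r } / inf{ v(x,y) : y ∈ X∖M, d(x,y) ≥ r } ] ≤ 5/2. -/
import Mathlib


open Real Filter

/-- Generalized Ibragimov function. -/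
noncomputable def vIb {X : Type*} [MetricSpace X] (F : X → ℝ) (x y : X) : ℝ :=
  2 * Real.log ((dist x y + max (F x) (F y)) / Real.sqrt (F x * F y))

lemma sqrt_mul_le_max {a b : ℝ} (ha : 0 ≤ a) (hb : 0 ≤ b) :
    Real.sqrt (a * b) ≤ max a b := by
  rcases le_total a b with h | h
  · calc Real.sqrt (a * b) ≤ Real.sqrt (b * b) := by
          apply Real.sqrt_le_sqrt; nlinarith
      _ = b := by rw [Real.sqrt_mul_self hb]
      _ ≤ max a b := le_max_right a b
  · calc Real.sqrt (a * b) ≤ Real.sqrt (a * a) := by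
          apply Real.sqrt_le_sqrt; nlinarith
      _ = a := by rw [Real.sqrt_mul_self ha]
      _ ≤ max a b := le_max_left a b

lemma vIb_symm {X : Type*} [MetricSpace X] (F : X → ℝ) (x y : X) :
    vIb F x y = vIb F y x := by
  unfold vIb
  rw [dist_comm, max_comm, mul_comm (F x)]

lemma vIb_self {X : Type*} [MetricSpace X] (F : X → ℝ) (x : X) (hx : 0 < F x) :
    vIb F x x = 0 := by
  unfold vIb
  rw [dist_self, max_self, Real.sqrt_mul_self hx.le, zero_add, div_self hx.ne',
    Real.log_one, mul_zero]

lemma vIb_nonneg {X : Type*} [MetricSpace X] (F : X → ℝ) (x y : X)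
    (hx : 0 < F x) (hy : 0 < F y) : 0 ≤ vIb F x y := by
  have hs : 0 < Real.sqrt (F x * F y) := Real.sqrt_pos.2 (by positivity)
  have h1 : Real.sqrt (F x * F y) ≤ max (F x) (F y) := sqrt_mul_le_max hx.le hy.le
  have : (1 : ℝ) ≤ (dist x y + max (F x) (F y)) / Real.sqrt (F x * F y) := by
    rw [le_div_iff₀ hs]
    have := dist_nonneg (x := x) (y := y)
    linarith
  exact mul_nonneg (by norm_num) (Real.log_nonneg this)

/-- Upper bound on `vIb` for close points. -/
lemma vIb_le {X : Type*} [MetricSpace X] (F : X → ℝ) (x y : X) {r : ℝ}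
    (hx : 0 < F x) (hy : 0 < F y) (hlip : |F x - F y| ≤ dist x y)
    (hd : dist x y ≤ r) (hr0 : 0 ≤ r) (hr : r ≤ F x / 10) :
    vIb F x y ≤ 7 / 2 * (r / F x) := by
  set c := F x with hc
  set b := F y with hb
  set d := dist x y with hdd
  have hd0 : 0 ≤ d := dist_nonneg
  have hblo : c - d ≤ b := by
    have := abs_le.1 hlip
    linarith [this.1]
  have hbhi : b ≤ c + d := by
    have := abs_le.1 hlip
    linarith [this.2]
  have hs : 0 < Real.sqrt (c * b) := Real.sqrt_pos.2 (by positivity)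
  -- key polynomial inequality
  have key : (d + max c b) ^ 2 ≤ (1 + 7 / 2 * (r / c)) * (c * b) := by
    have hrc : (1 + 7 / 2 * (r / c)) * (c * b) = (c + 7 / 2 * r) * b := by
      field_simp
    rw [hrc]
    rcases le_total b c with h | h
    · rw [max_eq_left h]
      nlinarith [mul_nonneg (sub_nonneg.2 hd) hx.le, mul_nonneg (sub_nonneg.2 hd) hr0,
        mul_nonneg hd0 hd0, mul_nonneg hr0 hr0, mul_pos hx hy]
    · rw [max_eq_right h]
      nlinarith [mul_nonneg (sub_nonneg.2 hd) hy.le, mul_nonneg (sub_nonneg.2 hd) hr0,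
        mul_nonneg hd0 hd0, mul_nonneg hr0 hr0, mul_pos hx hy]
  have hnum : 0 < d + max c b := by
    have : c ≤ max c b := le_max_left c b
    linarith
  have hT : 0 < (d + max c b) / Real.sqrt (c * b) := div_pos hnum hs
  have hsq : ((d + max c b) / Real.sqrt (c * b)) ^ 2 = (d + max c b) ^ 2 / (c * b) := by
    rw [div_pow, Real.sq_sqrt (by positivity)]
  have h2 : vIb F x y = Real.log (((d + max c b) / Real.sqrt (c * b)) ^ 2) := by
    rw [Real.log_pow]
    push_cast
    rfl
  rw [h2, hsq]
  calc Real.log ((d + max c b) ^ 2 / (c * b))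
      ≤ Real.log (1 + 7 / 2 * (r / c)) := by
        apply Real.log_le_log (by positivity)
        rw [div_le_iff₀ (by positivity)]
        linarith
    _ ≤ 1 + 7 / 2 * (r / c) - 1 := Real.log_le_sub_one_of_pos (by positivity)
    _ = 7 / 2 * (r / c) := by ring

/-- Lower bound on `vIb` for distant points. -/
lemma le_vIb {X : Type*} [MetricSpace X] (F : X → ℝ) (x y : X) {r : ℝ}
    (hx : 0 < F x) (hy : 0 < F y) (hlip : |F x - F y| ≤ dist x y)
    (hd : r ≤ dist x y) (hr0 : 0 ≤ r) :
    2 * Real.log ((F x + 2 * r) / (F x + r)) ≤ vIb F x y := by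
  set c := F x with hc
  set b := F y with hb
  set d := dist x y with hdd
  have hd0 : 0 ≤ d := dist_nonneg
  have hbhi : b ≤ c + d := by
    have := abs_le.1 hlip
    linarith [this.2]
  have hm : 0 < max c b := lt_of_lt_of_le hx (le_max_left c b)
  have hmhi : max c b ≤ c + d := by
    rcases max_cases c b with ⟨h1, _⟩ | ⟨h1, _⟩ <;> rw [h1] <;> linarith
  have hs : 0 < Real.sqrt (c * b) := Real.sqrt_pos.2 (by positivity)
  have hsm : Real.sqrt (c * b) ≤ max c b := sqrt_mul_le_max hx.le hy.le
  have step1 : (c + 2 * r) / (c + r) ≤ (d + max c b) / max c b := by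
    rw [div_le_div_iff₀ (by linarith) hm]
    nlinarith
  have step2 : (d + max c b) / max c b ≤ (d + max c b) / Real.sqrt (c * b) := by
    gcongr
  unfold vIb
  have hpos : 0 < (c + 2 * r) / (c + r) := by positivity
  have := Real.log_le_log hpos (le_trans step1 step2)
  linarith

/-- Numeric lower bound for the logarithmic quantity. -/
lemma log_ratio_lb {c r : ℝ} (hc : 0 < c) (hr0 : 0 ≤ r) (hr : r ≤ c / 10) :
    5 / 3 * (r / c) ≤ 2 * Real.log ((c + 2 * r) / (c + r)) := by
  have h1 : 0 < (c + 2 * r) / (c + r) := by positivity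
  have hlog : 1 - ((c + 2 * r) / (c + r))⁻¹ ≤ Real.log ((c + 2 * r) / (c + r)) := by
    have := Real.log_le_sub_one_of_pos (x := ((c + 2 * r) / (c + r))⁻¹) (by positivity)
    rw [Real.log_inv] at this
    linarith
  have hinv : ((c + 2 * r) / (c + r))⁻¹ = (c + r) / (c + 2 * r) := by
    rw [inv_div]
  rw [hinv] at hlog
  have h2 : 1 - (c + r) / (c + 2 * r) = r / (c + 2 * r) := by
    field_simp <;> ring
  rw [h2] at hlog
  have h3 : 5 / 3 * (r / c) ≤ 2 * (r / (c + 2 * r)) := by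
    have e1 : 5 / 3 * (r / c) = 5 * r / (3 * c) := by ring
    have e2 : 2 * (r / (c + 2 * r)) = 2 * r / (c + 2 * r) := by ring
    rw [e1, e2, div_le_div_iff₀ (by positivity) (by linarith)]
    nlinarith
  linarith

theorem stmt_18 {X : Type*} [MetricSpace X] (M : Set X)
    (hMclosed : IsClosed M) (hMne : M.Nonempty) (hMproper : M ≠ Set.univ)
    (F : X → ℝ) (hFpos : ∀ x ∉ M, 0 < F x)
    (hFlip : ∀ x ∉ M, ∀ y ∉ M, |F x - F y| ≤ dist x y) :
    -- the identity map `(X∖M, d) → (X∖M, v)` is a homeomorphism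
    (∀ x ∉ M, ∀ u : ℕ → X, (∀ n, u n ∉ M) →
      (Tendsto (fun n => dist (u n) x) atTop (nhds 0) ↔
        Tendsto (fun n => vIb F (u n) x) atTop (nhds 0))) ∧
    -- and it is (5/2)-quasiconformal
    (∀ x ∉ M,
      Filter.limsup
        (fun r : ℝ =>
          sSup ((fun y => vIb F x y) '' {y | y ∉ M ∧ dist x y ≤ r}) /
          sInf ((fun y => vIb F x y) '' {y | y ∉ M ∧ r ≤ dist x y}))
        (nhdsWithin (0 : ℝ) (Set.Ioi 0)) ≤ 5 / 2) := by
  constructor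
  · -- homeomorphism
    intro x hx u hu
    have hc : 0 < F x := hFpos x hx
    constructor
    · intro h
      rw [Metric.tendsto_atTop] at h ⊢
      intro ε hε
      set r : ℝ := min (F x / 10) (F x * ε / 7) with hrdef
      have hr0 : 0 < r := by
        apply lt_min <;> positivity
      obtain ⟨N, hN⟩ := h r hr0
      refine ⟨N, fun n hn => ?_⟩
      have hdn : dist (u n) x < r := by
        have := hN n hn
        rwa [Real.dist_eq, sub_zero, abs_of_nonneg dist_nonneg] at this
      have hle : vIb F x (u n) ≤ 7 / 2 * (r / F x) :=
        vIb_le F x (u n) hc (hFpos _ (hu n)) (hFlip x hx _ (hu n))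
          (by rw [dist_comm]; exact hdn.le) hr0.le (min_le_left _ _)
      have hnn : 0 ≤ vIb F x (u n) := vIb_nonneg F x (u n) hc (hFpos _ (hu n))
      rw [Real.dist_eq, sub_zero, vIb_symm, abs_of_nonneg hnn]
      have : 7 / 2 * (r / F x) ≤ 7 / 2 * ((F x * ε / 7) / F x) := by
        gcongr
        exact min_le_right _ _
      have heq : 7 / 2 * ((F x * ε / 7) / F x) = ε / 2 := by
        field_simp
      calc vIb F x (u n) ≤ 7 / 2 * (r / F x) := hle
        _ ≤ ε / 2 := by rw [← heq]; exact this
        _ < ε := by linarith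
    · intro h
      rw [Metric.tendsto_atTop] at h ⊢
      intro ε hε
      set δ : ℝ := 2 * Real.log ((F x + 2 * (ε / 2)) / (F x + ε / 2)) with hδdef
      have hδ0 : 0 < δ := by
        apply mul_pos (by norm_num)
        apply Real.log_pos
        rw [lt_div_iff₀ (by linarith)]
        linarith
      obtain ⟨N, hN⟩ := h δ hδ0
      refine ⟨N, fun n hn => ?_⟩
      have hv : vIb F (u n) x < δ := by
        have := hN n hn
        have hnn : 0 ≤ vIb F (u n) x := vIb_nonneg F (u n) x (hFpos _ (hu n)) hc
        rwa [Real.dist_eq, sub_zero, abs_of_nonneg hnn] at this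
      rw [Real.dist_eq, sub_zero, abs_of_nonneg dist_nonneg]
      by_contra hcon
      push_neg at hcon
      have : δ ≤ vIb F x (u n) :=
        le_vIb F x (u n) hc (hFpos _ (hu n)) (hFlip x hx _ (hu n))
          (by rw [dist_comm]; linarith) (by linarith)
      rw [vIb_symm] at hv
      linarith
  · -- quasiconformality
    intro x hx
    have hc : 0 < F x := hFpos x hx
    set c := F x with hcdef
    have hev : ∀ᶠ r in nhdsWithin (0 : ℝ) (Set.Ioi 0),
        sSup ((fun y => vIb F x y) '' {y | y ∉ M ∧ dist x y ≤ r}) /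
          sInf ((fun y => vIb F x y) '' {y | y ∉ M ∧ r ≤ dist x y}) ≤ 5 / 2 := by
      have hmem : Set.Ioo (0 : ℝ) (c / 10) ∈ nhdsWithin (0 : ℝ) (Set.Ioi 0) :=
        Ioo_mem_nhdsGT_of_mem ⟨le_refl 0, by positivity⟩
      filter_upwards [hmem] with r hr
      obtain ⟨hr0, hrc⟩ := hr
      set S := (fun y => vIb F x y) '' {y | y ∉ M ∧ dist x y ≤ r} with hSdef
      set I := (fun y => vIb F x y) '' {y | y ∉ M ∧ r ≤ dist x y} with hIdef
      rcases eq_or_ne (sInf I) 0 with h0 | h0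
      · rw [h0, div_zero]; norm_num
      · have hIne : I.Nonempty := by
          by_contra hemp
          rw [Set.not_nonempty_iff_eq_empty] at hemp
          rw [hemp, Real.sInf_empty] at h0
          exact h0 rfl
        have hIlb : ∀ v ∈ I, 5 / 3 * (r / c) ≤ v := by
          rintro v ⟨y, ⟨hyM, hyd⟩, rfl⟩
          calc 5 / 3 * (r / c) ≤ 2 * Real.log ((c + 2 * r) / (c + r)) :=
                log_ratio_lb hc hr0.le hrc.le
            _ ≤ vIb F x y :=
                le_vIb F x y hc (hFpos y hyM) (hFlip x hx y hyM) hyd hr0.le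
        have h1 : 5 / 3 * (r / c) ≤ sInf I := le_csInf hIne hIlb
        have hSub : ∀ v ∈ S, v ≤ 7 / 2 * (r / c) := by
          rintro v ⟨y, ⟨hyM, hyd⟩, rfl⟩
          exact vIb_le F x y hc (hFpos y hyM) (hFlip x hx y hyM) hyd hr0.le hrc.le
        have hSne : S.Nonempty :=
          ⟨vIb F x x, x, ⟨hx, by simp [dist_self, hr0.le]⟩, rfl⟩
        have h2 : sSup S ≤ 7 / 2 * (r / c) := csSup_le hSne hSub
        have hs0 : 0 < 5 / 3 * (r / c) := by positivity
        calc sSup S / sInf I ≤ (7 / 2 * (r / c)) / (5 / 3 * (r / c)) :=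
              div_le_div₀ (by positivity) h2 hs0 h1
          _ = (7 / 2) / (5 / 3) := by
              rw [mul_div_mul_right]
              positivity
          _ ≤ 5 / 2 := by norm_num
    apply Filter.limsup_le_of_le _ hev
    apply Filter.isCoboundedUnder_le_of_le _ (x := 0)
    intro r
    apply div_nonneg
    · apply Real.sSup_nonneg
      rintro v ⟨y, ⟨hyM, _⟩, rfl⟩
      exact vIb_nonneg F x y hc (hFpos y hyM)
    · apply Real.sInf_nonneg
      rintro v ⟨y, ⟨hyM, _⟩, rfl⟩
      exact vIb_nonneg F x y hc (hFpos y hyM)
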